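/- Let L, ℓ : ℝⁿ → ℝ be smooth, L strongly convex with minimizer θ*, and for ε near 0 define θ(ε) as the unique minimizer of L + ε·ℓ. Then θ is differentiable at 0 with derivative θ'(0) = -H⁻¹ ∇ℓ(θ*), where H = ∇²L(θ*). -/

import Mathlib

/-!
Near `ε = 0` the minimizer `θ ε` is characterised by the first-order condition
`∇L (θ ε) = -ε • ∇ℓ (θ ε)`. Strong convexity gives `m/2 ‖θ ε - θ*‖² ≤ ε (ℓ θ* - ℓ (θ ε))`, and
comparing the minimality inequalities for two values of `ε` shows that `ε ↦ ℓ (θ ε)` is antitone,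
hence locally bounded; so `θ` is continuous at `0`. Then `ε ↦ ∇L (θ ε)` has derivative `-∇ℓ θ*`
at `0`, and since `∇L` has the invertible strict derivative `H` at `θ*`, composing with a local
inverse of `∇L` (inverse function theorem) gives `θ' 0 = -H⁻¹ ∇ℓ θ*`.
-/

open RealInnerProductSpace Filter

open Set Topology InnerProductSpace

section Gradient

variable {E : Type*} [NormedAddCommGroup E] [InnerProductSpace ℝ E] [CompleteSpace E]

theorem IsLocalMin.gradient_eq_zero {f : E → ℝ} {x : E} (h : IsLocalMin f x) :
    gradient f x = 0 := by
  rw [← (toDual ℝ E).map_eq_zero_iff, toDual_gradient, h.fderiv_eq_zero]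

theorem HasGradientAt.add {f g : E → ℝ} {f' g' x : E} (hf : HasGradientAt f f' x)
    (hg : HasGradientAt g g' x) : HasGradientAt (fun y => f y + g y) (f' + g') x := by
  rw [hasGradientAt_iff_hasFDerivAt, map_add]
  exact hf.hasFDerivAt.add hg.hasFDerivAt

theorem HasGradientAt.const_mul {f : E → ℝ} {f' x : E} (c : ℝ) (hf : HasGradientAt f f' x) :
    HasGradientAt (fun y => c * f y) (c • f') x := by
  rw [hasGradientAt_iff_hasFDerivAt, map_smul]
  simpa using hf.hasFDerivAt.const_mul c

theorem IsLocalMin.gradient_add_smul_eq_zero {f g : E → ℝ} {x : E} {c : ℝ}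
    (hf : DifferentiableAt ℝ f x) (hg : DifferentiableAt ℝ g x)
    (h : IsLocalMin (fun y => f y + c * g y) x) : gradient f x + c • gradient g x = 0 :=
  (hf.hasGradientAt.add (hg.hasGradientAt.const_mul c)).gradient.symm.trans h.gradient_eq_zero

theorem ContDiff.gradient {f : E → ℝ} {n : WithTop ℕ∞} (hf : ContDiff ℝ (n + 1) f) :
    ContDiff ℝ n (gradient f) :=
  (toDual ℝ E).symm.toContinuousLinearEquiv.contDiff.comp (hf.fderiv_right le_rfl)

end Gradient

theorem IsMinOn.le_of_add_mul {X : Type*} {f g : X → ℝ} {a b : ℝ} {x y : X}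
    (hx : IsMinOn (fun z => f z + a * g z) univ x) (hy : IsMinOn (fun z => f z + b * g z) univ y)
    (hab : a < b) : g y ≤ g x := by
  have hxy := isMinOn_univ_iff.1 hx y
  have hyx := isMinOn_univ_iff.1 hy x
  nlinarith

theorem tendsto_of_isMinOn_add_mul {X : Type*} [PseudoMetricSpace X] {f g : X → ℝ} {x₀ : X}
    {θ : ℝ → X} {m : ℝ} (hm : 0 < m) (hgrowth : ∀ x, f x₀ + m / 2 * dist x x₀ ^ 2 ≤ f x)
    (hθ : ∀ᶠ ε in 𝓝 0, IsMinOn (fun z => f z + ε * g z) univ (θ ε)) :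
    Tendsto θ (𝓝 0) (𝓝 x₀) := by
  obtain ⟨δ, hδ, hball⟩ := Metric.eventually_nhds_iff.1 hθ
  have hmin : ∀ ε, |ε| < δ → IsMinOn (fun z => f z + ε * g z) univ (θ ε) := fun ε hε =>
    hball (by simpa using hε)
  set K := |g x₀ - g (θ (δ / 2))| + |g x₀ - g (θ (-(δ / 2)))|
  have hbound : ∀ ε, |ε| < δ / 2 → dist (θ ε) x₀ ≤ √(2 * K / m * |ε|) := by
    intro ε hε
    obtain ⟨hlo, hhi⟩ := abs_lt.1 hε
    have hδ' : |δ / 2| < δ := by rw [abs_of_pos (by positivity)]; linarith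
    have hε' : |ε| < δ := by linarith
    -- `ε ↦ g (θ ε)` is antitone, so `g (θ ε)` lies between its values at `± δ / 2`
    have hup := (hmin ε hε').le_of_add_mul (hmin _ hδ') hhi
    have hdown := (hmin _ (by rwa [abs_neg])).le_of_add_mul (hmin ε hε') hlo
    have hgap : |g x₀ - g (θ ε)| ≤ K := by
      have := abs_nonneg (g x₀ - g (θ (δ / 2)))
      have := abs_nonneg (g x₀ - g (θ (-(δ / 2))))
      rw [abs_le]
      constructor <;> linarith [le_abs_self (g x₀ - g (θ (δ / 2))),
        neg_abs_le (g x₀ - g (θ (-(δ / 2))))]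
    have hval : m / 2 * dist (θ ε) x₀ ^ 2 ≤ ε * (g x₀ - g (θ ε)) := by
      have := isMinOn_univ_iff.1 (hmin ε hε') x₀
      have := hgrowth (θ ε)
      linarith
    have hεK : ε * (g x₀ - g (θ ε)) ≤ |ε| * K :=
      (le_abs_self _).trans (by rw [abs_mul]; gcongr)
    refine Real.le_sqrt_of_sq_le ?_
    rw [div_mul_eq_mul_div, le_div_iff₀ hm]
    nlinarith
  have hlim : Tendsto (fun ε : ℝ => √(2 * K / m * |ε|)) (𝓝 0) (𝓝 0) := by
    simpa using ((continuous_const.mul continuous_abs).sqrt.tendsto (0 : ℝ))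
  refine tendsto_iff_dist_tendsto_zero.2 (squeeze_zero' (.of_forall fun _ => dist_nonneg) ?_ hlim)
  filter_upwards [eventually_abs_sub_lt 0 (half_pos hδ)] with ε hε
  exact hbound ε (by simpa using hε)

theorem hasDerivAt_sub_smul_of_continuousAt {𝕜 F : Type*} [NontriviallyNormedField 𝕜]
    [NormedAddCommGroup F] [NormedSpace 𝕜 F] {c : 𝕜 → F} {t : 𝕜} (hc : ContinuousAt c t) :
    HasDerivAt (fun s => (s - t) • c s) (c t) t := by
  rw [hasDerivAt_iff_tendsto_slope]
  refine (hc.tendsto.mono_left nhdsWithin_le_nhds).congr' ?_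
  filter_upwards [self_mem_nhdsWithin] with s hs
  simp [slope_def_module, smul_smul, inv_mul_cancel₀ (sub_ne_zero.2 hs)]

theorem HasStrictFDerivAt.hasDerivAt_of_comp {𝕜 E F : Type*} [NontriviallyNormedField 𝕜]
    [NormedAddCommGroup E] [NormedSpace 𝕜 E] [CompleteSpace E]
    [NormedAddCommGroup F] [NormedSpace 𝕜 F]
    {g : E → F} {H : E ≃L[𝕜] F} {θ : 𝕜 → E} {t : 𝕜} {v : F}
    (hg : HasStrictFDerivAt g (H : E →L[𝕜] F) (θ t)) (hθ : ContinuousAt θ t)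
    (hgθ : HasDerivAt (g ∘ θ) v t) : HasDerivAt θ (H.symm v) t := by
  have hinv := hg.to_localInverse.hasFDerivAt.comp_hasDerivAt t hgθ
  refine hinv.congr_of_eventuallyEq ?_
  filter_upwards [hθ.eventually hg.eventually_left_inverse] with s hs
  exact hs.symm

/-- Influence-function derivative: if `L, ℓ : ℝⁿ → ℝ` are C², `L` is strongly convex with
minimizer `θ*`, and for `ε` near `0` the curve `θ(ε)` is the unique minimizer of `L + ε·ℓ`
(with `θ(0) = θ*`), then `θ` is differentiable at `0` with derivative
`θ'(0) = -H⁻¹ ∇ℓ(θ*)`, where `H = ∇²L(θ*)` (given via its continuous linear inverse). -/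
theorem stmt_2 (n : ℕ) (L ℓ : EuclideanSpace ℝ (Fin n) → ℝ)
    (θstar : EuclideanSpace ℝ (Fin n)) (θ : ℝ → EuclideanSpace ℝ (Fin n))
    (hL : ContDiff ℝ 2 L) (hℓ : ContDiff ℝ 2 ℓ) (m : ℝ) (hm : 0 < m)
    (hconv : ∀ x y : EuclideanSpace ℝ (Fin n),
      L x + ⟪gradient L x, y - x⟫ + (m / 2) * ‖y - x‖ ^ 2 ≤ L y)
    (hmin : ∀ y, L θstar ≤ L y) (hθ0 : θ 0 = θstar)
    (hθmin : ∀ᶠ ε in nhds (0 : ℝ),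
      (∀ y, L (θ ε) + ε * ℓ (θ ε) ≤ L y + ε * ℓ y) ∧
      (∀ y, (∀ y', L y + ε * ℓ y ≤ L y' + ε * ℓ y') → y = θ ε))
    (H Hinv : EuclideanSpace ℝ (Fin n) →L[ℝ] EuclideanSpace ℝ (Fin n))
    (hH : H = fderiv ℝ (gradient L) θstar)
    (hHinv : (∀ v, Hinv (H v) = v) ∧ (∀ v, H (Hinv v) = v)) :
    HasDerivAt θ (-(Hinv (gradient ℓ θstar))) 0 := by
  have hθmin' : ∀ᶠ ε in 𝓝 (0 : ℝ), IsMinOn (fun y => L y + ε * ℓ y) univ (θ ε) :=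
    hθmin.mono fun ε h => isMinOn_univ_iff.2 h.1
  have hgradL : gradient L θstar = 0 :=
    (isMinOn_univ_iff.2 hmin).isLocalMin univ_mem |>.gradient_eq_zero
  have hθcont : ContinuousAt θ 0 := by
    rw [ContinuousAt, hθ0]
    refine tendsto_of_isMinOn_add_mul hm (fun x => ?_) hθmin'
    simpa [hgradL, dist_eq_norm] using hconv θstar x
  have hstat : ∀ᶠ ε in 𝓝 (0 : ℝ), gradient L (θ ε) = (ε - 0) • -gradient ℓ (θ ε) := by
    filter_upwards [hθmin'] with ε hε
    rw [sub_zero, smul_neg, eq_neg_iff_add_eq_zero]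
    exact (hε.isLocalMin univ_mem).gradient_add_smul_eq_zero
      (hL.differentiable two_ne_zero _) (hℓ.differentiable two_ne_zero _)
  have hgradℓθ : ContinuousAt (fun ε => -gradient ℓ (θ ε)) 0 :=
    ((ContDiff.gradient (n := 1) hℓ).continuous.continuousAt.comp hθcont).neg
  have hstrict : HasStrictFDerivAt (gradient L)
      (ContinuousLinearEquiv.equivOfInverse H Hinv hHinv.1 hHinv.2 : _ →L[ℝ] _) (θ 0) := by
    rw [hθ0]
    exact hH ▸ (ContDiff.gradient (n := 1) hL).contDiffAt.hasStrictFDerivAt one_ne_zero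
  have hderiv := hstrict.hasDerivAt_of_comp hθcont
    ((hasDerivAt_sub_smul_of_continuousAt hgradℓθ).congr_of_eventuallyEq hstat)
  simpa [hθ0] using hderiv
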